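/- Let K ≥ 1 be a real number and let (x₁,y₁), (x₂,y₂) ∈ ℝ² with (x₁,y₁) ≠ (x₂,y₂). Then the 6×6 real matrix M = [[x₁, y₁, 0, 0, 1, 0], [0, 0, x₁, y₁, 0, 1], [x₂, y₂, 0, 0, 1, 0], [0, 0, x₂, y₂, 0, 1], [1/K, 0, 0, −1, 0, 0], [0, K, 1, 0, 0, 0]] is nonsingular (its determinant is nonzero). -/

import Mathlib

theorem det_fsqc_boundary_matrix {R : Type*} [CommRing R] (a K x₁ y₁ x₂ y₂ : R) :
    Matrix.det !![x₁, y₁, 0, 0, 1, 0;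
                  0, 0, x₁, y₁, 0, 1;
                  x₂, y₂, 0, 0, 1, 0;
                  0, 0, x₂, y₂, 0, 1;
                  a, 0, 0, -1, 0, 0;
                  0, K, 1, 0, 0, 0] = -(K * (x₂ - x₁) ^ 2 + a * (y₂ - y₁) ^ 2) := by
  simp [Matrix.det_succ_row_zero, Fin.sum_univ_succ]
  simp [Fin.succAbove, Fin.lt_def]
  ring

theorem weighted_sq_add_sq_pos {a b u v : ℝ} (ha : 0 < a) (hb : 0 < b) (huv : (u, v) ≠ (0, 0)) :
    0 < a * u ^ 2 + b * v ^ 2 := by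
  rcases eq_or_ne u 0 with rfl | hu
  · have hv : v ≠ 0 := fun hv => huv (by rw [hv])
    positivity
  · have := mul_pos ha (sq_pos_of_ne_zero hu)
    positivity

theorem fsqc_matrix_nonsingular (K x₁ y₁ x₂ y₂ : ℝ) (hK : 1 ≤ K)
    (hne : (x₁, y₁) ≠ (x₂, y₂)) :
    (Matrix.det !![x₁, y₁, 0, 0, 1, 0;
                   0, 0, x₁, y₁, 0, 1;
                   x₂, y₂, 0, 0, 1, 0;
                   0, 0, x₂, y₂, 0, 1;
                   1/K, 0, 0, -1, 0, 0;
                   0, K, 1, 0, 0, 0]) ≠ 0 := by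
  have hK₀ : 0 < K := by linarith
  have hΔ : (x₂ - x₁, y₂ - y₁) ≠ (0, 0) := by
    simpa [Prod.ext_iff, sub_eq_zero, eq_comm] using hne
  rw [det_fsqc_boundary_matrix]
  exact neg_ne_zero.mpr (weighted_sq_add_sq_pos hK₀ (by positivity) hΔ).ne'
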